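/- arXiv:2207.07017 — 6 statements merged into one kernel-verified Lean document; each statement's English description precedes it below -/
import Mathlib

section
/- Let α, β be real numbers with |α| + |β| < 1 and β ≠ 0. Then the 2×2 real symmetric matrix M with entries M₀₀ = α² − 1 + |β|, M₀₁ = M₁₀ = αβ, M₁₁ = β² − |β| is negative definite: for every nonzero v ∈ ℝ², v ⬝ᵥ (M.mulVec v) < 0. In particular M₀₀ < 0 and det M = |β|((|β| − 1)² − α²) > 0. -/
/-!
Completing the square, `a · vᵀMv = (a v₀ + b v₁)² + det M · v₁²` for `M = !![a, b; b, c]`, shows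
that a symmetric `2 × 2` matrix with `a < 0` and `det M > 0` is negative definite. For the Kawahara
matrix, `β² = |β|²` turns the determinant into `|β| ((1 - |β|)² - α²)`, which is positive because
`|α| < 1 - |β|` and `β ≠ 0`; the same bound gives `α² < (1 - |β|)² ≤ 1 - |β|`, i.e. `M₀₀ < 0`.
-/

open Matrix

namespace Matrix

theorem dotProduct_mulVec_fin_two_symm {R : Type*} [CommRing R] (a b c : R) (v : Fin 2 → R) :
    v ⬝ᵥ !![a, b; b, c] *ᵥ v = a * v 0 ^ 2 + 2 * b * v 0 * v 1 + c * v 1 ^ 2 := by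
  simp only [dotProduct, mulVec, Fin.sum_univ_two, cons_val', cons_val_zero, cons_val_one,
    empty_val', cons_val_fin_one, of_apply]
  ring

theorem dotProduct_mulVec_fin_two_symm_neg {R : Type*} [CommRing R] [LinearOrder R]
    [IsStrictOrderedRing R] {a b c : R} (ha : a < 0) (hdet : 0 < !![a, b; b, c].det)
    {v : Fin 2 → R} (hv : v ≠ 0) : v ⬝ᵥ !![a, b; b, c] *ᵥ v < 0 := by
  have hsquare : a * (a * v 0 ^ 2 + 2 * b * v 0 * v 1 + c * v 1 ^ 2)
      = (a * v 0 + b * v 1) ^ 2 + (a * c - b ^ 2) * v 1 ^ 2 := by ring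
  rw [det_fin_two_of, ← sq] at hdet
  have hpos : 0 < (a * v 0 + b * v 1) ^ 2 + (a * c - b ^ 2) * v 1 ^ 2 := by
    rcases eq_or_ne (v 1) 0 with h1 | h1
    · have h0 : v 0 ≠ 0 := fun h0 => hv (by ext i; fin_cases i <;> simp [h0, h1])
      simpa [h1] using pow_two_pos_of_ne_zero (mul_ne_zero ha.ne h0)
    · nlinarith [sq_nonneg (a * v 0 + b * v 1), mul_pos hdet (pow_two_pos_of_ne_zero h1)]
  rw [dotProduct_mulVec_fin_two_symm]
  nlinarith

end Matrix

theorem det_kawahara (α β : ℝ) :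
    !![α ^ 2 - 1 + |β|, α * β; α * β, β ^ 2 - |β|].det = |β| * ((|β| - 1) ^ 2 - α ^ 2) := by
  rw [det_fin_two_of]
  linear_combination (1 - |β|) * sq_abs β

theorem kawahara_matrix_neg_def (α β : ℝ) (hab : |α| + |β| < 1) (hβ : β ≠ 0) :
    (∀ v : Fin 2 → ℝ, v ≠ 0 →
      v ⬝ᵥ (!![α ^ 2 - 1 + |β|, α * β; α * β, β ^ 2 - |β|]).mulVec v < 0) ∧
    (!![α ^ 2 - 1 + |β|, α * β; α * β, β ^ 2 - |β|]) 0 0 < 0 ∧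
    (!![α ^ 2 - 1 + |β|, α * β; α * β, β ^ 2 - |β|]).det
      = |β| * ((|β| - 1) ^ 2 - α ^ 2) ∧
    0 < (!![α ^ 2 - 1 + |β|, α * β; α * β, β ^ 2 - |β|]).det := by
  have hβ_pos : 0 < |β| := abs_pos.mpr hβ
  have hβ_lt : |β| < 1 := by linarith [abs_nonneg α]
  have hα : α ^ 2 < (1 - |β|) ^ 2 :=
    sq_lt_sq' (by linarith [neg_abs_le α]) (by linarith [le_abs_self α])
  have h00 : α ^ 2 - 1 + |β| < 0 := by nlinarith
  have hdet : 0 < !![α ^ 2 - 1 + |β|, α * β; α * β, β ^ 2 - |β|].det := by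
    rw [det_kawahara]
    exact mul_pos hβ_pos (by nlinarith)
  exact ⟨fun v hv => dotProduct_mulVec_fin_two_symm_neg h00 hdet hv, h00, det_kawahara α β, hdet⟩
end

section
/- Let α, β be real numbers with |α| + |β| < 1 and β ≠ 0. Then the 2×2 real symmetric matrix M* with entries M*₀₀ = α² − 1 + |β|, M*₀₁ = M*₁₀ = α|β|, M*₁₁ = β² − |β| is negative definite: for every nonzero v ∈ ℝ², v ⬝ᵥ (M*.mulVec v) < 0. In particular M*₀₀ < 0 and det M* = |β|((|β| − 1)² − α²) > 0. -/
/-! Sylvester's criterion for a symmetric 2×2 matrix: the (0,0) entry is negative because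
α² ≤ |α| < 1 - |β|, and the determinant |β|((1 - |β|)² - α²) is positive because 1 - |β| > |α|
and β ≠ 0. -/

open Matrix

section QuadraticForm

variable {K : Type*}

theorem dotProduct_mulVec_fin_two [CommRing K] (a b c d : K) (v : Fin 2 → K) :
    v ⬝ᵥ !![a, b; c, d] *ᵥ v = a * v 0 ^ 2 + (b + c) * (v 0 * v 1) + d * v 1 ^ 2 := by
  simp only [dotProduct, mulVec, Fin.sum_univ_two, cons_val', cons_val_zero, cons_val_one,
    empty_val', cons_val_fin_one, of_apply]
  ring

variable [Field K] [LinearOrder K] [IsStrictOrderedRing K]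

theorem quadratic_neg_of_neg_of_discr_neg {a b c : K} (ha : a < 0) (hdisc : 0 < a * c - b ^ 2)
    {x y : K} (hxy : x ≠ 0 ∨ y ≠ 0) : a * x ^ 2 + 2 * b * (x * y) + c * y ^ 2 < 0 := by
  have complete_square : a * (a * x ^ 2 + 2 * b * (x * y) + c * y ^ 2)
      = (a * x + b * y) ^ 2 + (a * c - b ^ 2) * y ^ 2 := by ring
  refine neg_of_mul_pos_right ?_ ha.le
  rw [complete_square]
  by_cases hy : y = 0
  · have hx : x ≠ 0 := hxy.resolve_right (not_not.2 hy)
    subst hy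
    simpa using sq_pos_of_ne_zero (mul_ne_zero ha.ne hx)
  · positivity

theorem dotProduct_mulVec_neg_of_fin_two {a b c : K} (ha : a < 0) (hdet : 0 < !![a, b; b, c].det)
    {v : Fin 2 → K} (hv : v ≠ 0) : v ⬝ᵥ !![a, b; b, c] *ᵥ v < 0 := by
  have hv' : v 0 ≠ 0 ∨ v 1 ≠ 0 := by
    by_contra! h
    exact hv (funext (Fin.forall_fin_two.2 h))
  rw [det_fin_two_of] at hdet
  rw [dotProduct_mulVec_fin_two, ← two_mul]
  exact quadratic_neg_of_neg_of_discr_neg ha (by linarith) hv'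

end QuadraticForm

theorem sq_sub_sq_pos_of_abs_add_abs_lt_one {α β : ℝ} (hab : |α| + |β| < 1) :
    0 < (|β| - 1) ^ 2 - α ^ 2 := by
  rw [← sq_abs α, ← neg_sq, sq_sub_sq]
  have := abs_nonneg α
  exact mul_pos (by linarith) (by linarith)

theorem sq_sub_one_add_abs_neg {α β : ℝ} (hab : |α| + |β| < 1) : α ^ 2 - 1 + |β| < 0 := by
  have hα : |α| < 1 := by linarith [abs_nonneg β]
  have : α ^ 2 ≤ |α| := by
    rw [← sq_abs α, sq]
    exact mul_le_of_le_one_left (abs_nonneg α) hα.le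
  linarith

theorem kawahara_adjoint_matrix_det (α β : ℝ) :
    (!![α ^ 2 - 1 + |β|, α * |β|; α * |β|, β ^ 2 - |β|]).det
      = |β| * ((|β| - 1) ^ 2 - α ^ 2) := by
  rw [det_fin_two_of, ← sq_abs β]
  ring

theorem kawahara_adjoint_matrix_neg_def (α β : ℝ) (hab : |α| + |β| < 1) (hβ : β ≠ 0) :
    (∀ v : Fin 2 → ℝ, v ≠ 0 →
      v ⬝ᵥ (!![α ^ 2 - 1 + |β|, α * |β|; α * |β|, β ^ 2 - |β|]).mulVec v < 0) ∧
    (!![α ^ 2 - 1 + |β|, α * |β|; α * |β|, β ^ 2 - |β|]) 0 0 < 0 ∧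
    (!![α ^ 2 - 1 + |β|, α * |β|; α * |β|, β ^ 2 - |β|]).det
      = |β| * ((|β| - 1) ^ 2 - α ^ 2) ∧
    0 < (!![α ^ 2 - 1 + |β|, α * |β|; α * |β|, β ^ 2 - |β|]).det := by
  have hdet := kawahara_adjoint_matrix_det α β
  have hdet_pos : 0 < (!![α ^ 2 - 1 + |β|, α * |β|; α * |β|, β ^ 2 - |β|]).det :=
    hdet ▸ mul_pos (abs_pos.2 hβ) (sq_sub_sq_pos_of_abs_add_abs_lt_one hab)
  have h00 := sq_sub_one_add_abs_neg (α := α) hab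
  exact ⟨fun _ hv ↦ dotProduct_mulVec_neg_of_fin_two h00 hdet_pos hv, h00, hdet, hdet_pos⟩
end

section
/- Let a, b, L be real numbers with L > 0, and let u : ℝ → ℝ be five times continuously differentiable with u(0) = u(L) = 0 and u'(0) = u'(L) = 0. Then ∫₀ᴸ u(x) · ( −a·u'(x) − b·u'''(x) + u⁽⁵⁾(x) ) dx = ( (u''(L))² − (u''(0))² ) / 2. -/
theorem kawahara_dissipation_identity (a b L : ℝ) (hL : 0 < L) (u : ℝ → ℝ)
    (hu : ContDiff ℝ 5 u)
    (h0 : u 0 = 0) (hL0 : u L = 0)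
    (h0' : iteratedDeriv 1 u 0 = 0) (hL' : iteratedDeriv 1 u L = 0) :
    ∫ x in (0 : ℝ)..L,
        u x * (-a * iteratedDeriv 1 u x - b * iteratedDeriv 3 u x + iteratedDeriv 5 u x)
      = ((iteratedDeriv 2 u L) ^ 2 - (iteratedDeriv 2 u 0) ^ 2) / 2 := by
  have hd : ∀ k : ℕ, k < 5 → ∀ x : ℝ,
      HasDerivAt (iteratedDeriv k u) (iteratedDeriv (k + 1) u x) x := by
    intro k hk x
    have h1 : Differentiable ℝ (iteratedDeriv k u) :=
      hu.differentiable_iteratedDeriv k (by exact_mod_cast hk)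
    rw [iteratedDeriv_succ]
    exact (h1 x).hasDerivAt
  have hu0 : ∀ x : ℝ, HasDerivAt u (iteratedDeriv 1 u x) x := by
    intro x
    have := hd 0 (by norm_num) x
    rwa [iteratedDeriv_zero] at this
  set F : ℝ → ℝ := fun x =>
    -a * (u x) ^ 2 / 2 - b * (u x * iteratedDeriv 2 u x - (iteratedDeriv 1 u x) ^ 2 / 2)
      + (u x * iteratedDeriv 4 u x - iteratedDeriv 1 u x * iteratedDeriv 3 u x
        + (iteratedDeriv 2 u x) ^ 2 / 2) with hF
  have hFd : ∀ x : ℝ,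
      HasDerivAt F (u x * (-a * iteratedDeriv 1 u x - b * iteratedDeriv 3 u x
        + iteratedDeriv 5 u x)) x := by
    intro x
    have d0 := hu0 x
    have d1 := hd 1 (by norm_num) x
    have d2 := hd 2 (by norm_num) x
    have d3 := hd 3 (by norm_num) x
    have d4 := hd 4 (by norm_num) x
    have H := ((((d0.pow 2).const_mul (-a)).div_const 2).sub
        (((d0.mul d2).sub ((d1.pow 2).div_const 2)).const_mul b)).add
        (((d0.mul d4).sub (d1.mul d3)).add ((d2.pow 2).div_const 2))
    convert H using 1
    · rfl
    · rfl
    · rfl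
    push_cast
    norm_num
    ring
  have hcont : Continuous (fun x => u x * (-a * iteratedDeriv 1 u x
      - b * iteratedDeriv 3 u x + iteratedDeriv 5 u x)) := by
    have c0 : Continuous u := hu.continuous
    have c1 : Continuous (iteratedDeriv 1 u) := hu.continuous_iteratedDeriv 1 (by norm_num)
    have c3 : Continuous (iteratedDeriv 3 u) := hu.continuous_iteratedDeriv 3 (by norm_num)
    have c5 : Continuous (iteratedDeriv 5 u) := hu.continuous_iteratedDeriv 5 (by norm_num)
    fun_prop
  have key : ∫ x in (0 : ℝ)..L,
      u x * (-a * iteratedDeriv 1 u x - b * iteratedDeriv 3 u x + iteratedDeriv 5 u x)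
      = F L - F 0 :=
    intervalIntegral.integral_eq_sub_of_hasDerivAt (fun x _ => hFd x)
      (hcont.intervalIntegrable 0 L)
  rw [key, hF]
  simp only [h0, hL0, h0', hL']
  ring
end

section
/- Let a, b, L be real numbers with L > 0, and let u : ℝ → ℝ be five times continuously differentiable with u(0) = u(L) = 0 and u'(0) = u'(L) = 0. Then ∫₀ᴸ x·u(x)·( a·u'(x) + b·u'''(x) − u⁽⁵⁾(x) ) dx = −(a/2)∫₀ᴸ u(x)² dx + (3b/2)∫₀ᴸ (u'(x))² dx + (5/2)∫₀ᴸ (u''(x))² dx − (L/2)(u''(L))². -/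
theorem kawahara_morawetz_identity (a b L : ℝ) (hL : 0 < L) (u : ℝ → ℝ)
    (hu : ContDiff ℝ 5 u)
    (h0 : u 0 = 0) (hL0 : u L = 0)
    (h0' : iteratedDeriv 1 u 0 = 0) (hL' : iteratedDeriv 1 u L = 0) :
    ∫ x in (0 : ℝ)..L,
        x * u x * (a * iteratedDeriv 1 u x + b * iteratedDeriv 3 u x - iteratedDeriv 5 u x)
      = -(a / 2) * (∫ x in (0 : ℝ)..L, (u x) ^ 2)
        + (3 * b / 2) * (∫ x in (0 : ℝ)..L, (iteratedDeriv 1 u x) ^ 2)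
        + (5 / 2) * (∫ x in (0 : ℝ)..L, (iteratedDeriv 2 u x) ^ 2)
        - (L / 2) * (iteratedDeriv 2 u L) ^ 2 := by
  set u1 := iteratedDeriv 1 u with hu1
  set u2 := iteratedDeriv 2 u with hu2
  set u3 := iteratedDeriv 3 u with hu3
  set u4 := iteratedDeriv 4 u with hu4
  set u5 := iteratedDeriv 5 u with hu5
  have hc : ∀ m : ℕ, m ≤ 5 → Continuous (iteratedDeriv m u) := fun m hm =>
    hu.continuous_iteratedDeriv m (by exact_mod_cast hm)
  have hd : ∀ m : ℕ, m < 5 → ∀ x : ℝ, HasDerivAt (iteratedDeriv m u) (iteratedDeriv (m+1) u x) x := by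
    intro m hm x
    have h := (hu.differentiable_iteratedDeriv m (by exact_mod_cast hm)) x
    rw [iteratedDeriv_succ]
    exact h.hasDerivAt
  have hdu : ∀ x : ℝ, HasDerivAt u (u1 x) x := by
    intro x
    have h := hd 0 (by norm_num) x
    rwa [iteratedDeriv_zero] at h
  have hd1 : ∀ x : ℝ, HasDerivAt u1 (u2 x) x := fun x => hd 1 (by norm_num) x
  have hd2 : ∀ x : ℝ, HasDerivAt u2 (u3 x) x := fun x => hd 2 (by norm_num) x
  have hd3 : ∀ x : ℝ, HasDerivAt u3 (u4 x) x := fun x => hd 3 (by norm_num) x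
  have hd4 : ∀ x : ℝ, HasDerivAt u4 (u5 x) x := fun x => hd 4 (by norm_num) x
  set F : ℝ → ℝ := fun x =>
    a/2 * (x * (u x)^2)
    + b * (x * (u x * u2 x) - x * (u1 x)^2/2 - u x * u1 x)
    + (- (x * (u x * u4 x)) + x * (u1 x * u3 x) - x * (u2 x)^2/2 + u x * u3 x
       - 2 * (u1 x * u2 x)) with hF
  set g : ℝ → ℝ := fun x =>
    x * u x * (a * u1 x + b * u3 x - u5 x)
    + a/2 * (u x)^2 - 3*b/2 * (u1 x)^2 - 5/2 * (u2 x)^2 with hg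
  have hFd : ∀ x : ℝ, HasDerivAt F (g x) x := by
    intro x
    have hx : HasDerivAt (fun y : ℝ => y) 1 x := hasDerivAt_id x
    have t1 := (hx.mul ((hdu x).pow 2)).const_mul (a/2)
    have t2 := (((hx.mul ((hdu x).mul (hd2 x))).sub
      ((hx.mul ((hd1 x).pow 2)).div_const 2)).sub ((hdu x).mul (hd1 x))).const_mul b
    have t3 := ((((hx.mul ((hdu x).mul (hd4 x))).neg.add
      (hx.mul ((hd1 x).mul (hd3 x)))).sub
      ((hx.mul ((hd2 x).pow 2)).div_const 2)).add
      ((hdu x).mul (hd3 x))).sub (((hd1 x).mul (hd2 x)).const_mul 2)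
    have H := (t1.add t2).add t3
    refine (H.congr_deriv ?_).congr_of_eventuallyEq (Filter.Eventually.of_forall fun y => ?_)
    · simp only [hg, Pi.add_apply, Pi.sub_apply, Pi.neg_apply, Pi.mul_apply, Pi.pow_apply]
      ring
    · simp only [hF, Pi.add_apply, Pi.sub_apply, Pi.neg_apply, Pi.mul_apply, Pi.pow_apply]
  have hcu : Continuous u := hu.continuous
  have hc1 : Continuous u1 := hc 1 (by norm_num)
  have hc2 : Continuous u2 := hc 2 (by norm_num)
  have hc3 : Continuous u3 := hc 3 (by norm_num)
  have hc5 : Continuous u5 := hc 5 le_rfl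
  have hi0 : IntervalIntegrable (fun x => x * u x * (a * u1 x + b * u3 x - u5 x))
      MeasureTheory.volume 0 L := by
    exact ((continuous_id.mul hcu).mul (((continuous_const.mul hc1).add
      (continuous_const.mul hc3)).sub hc5)).intervalIntegrable 0 L
  have hiu : IntervalIntegrable (fun x => (u x)^2) MeasureTheory.volume 0 L :=
    (hcu.pow 2).intervalIntegrable 0 L
  have hi1 : IntervalIntegrable (fun x => (u1 x)^2) MeasureTheory.volume 0 L :=
    (hc1.pow 2).intervalIntegrable 0 L
  have hi2 : IntervalIntegrable (fun x => (u2 x)^2) MeasureTheory.volume 0 L :=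
    (hc2.pow 2).intervalIntegrable 0 L
  have hig : IntervalIntegrable g MeasureTheory.volume 0 L := by
    refine Continuous.intervalIntegrable ?_ 0 L
    rw [hg]
    exact ((((continuous_id.mul hcu).mul (((continuous_const.mul hc1).add
      (continuous_const.mul hc3)).sub hc5)).add
      (continuous_const.mul (hcu.pow 2))).sub
      (continuous_const.mul (hc1.pow 2))).sub (continuous_const.mul (hc2.pow 2))
  have hFtc : ∫ x in (0:ℝ)..L, g x = F L - F 0 :=
    intervalIntegral.integral_eq_sub_of_hasDerivAt (fun x _ => hFd x) hig
  have hsplit : ∫ x in (0:ℝ)..L, g x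
      = (∫ x in (0:ℝ)..L, x * u x * (a * u1 x + b * u3 x - u5 x))
        + (a/2) * (∫ x in (0:ℝ)..L, (u x)^2)
        - (3*b/2) * (∫ x in (0:ℝ)..L, (u1 x)^2)
        - (5/2) * (∫ x in (0:ℝ)..L, (u2 x)^2) := by
    rw [hg]
    rw [show (fun x => x * u x * (a * u1 x + b * u3 x - u5 x)
        + a/2 * (u x)^2 - 3*b/2 * (u1 x)^2 - 5/2 * (u2 x)^2)
      = fun x => ((x * u x * (a * u1 x + b * u3 x - u5 x)
        + a/2 * (u x)^2) - 3*b/2 * (u1 x)^2) - 5/2 * (u2 x)^2 from rfl]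
    rw [intervalIntegral.integral_sub (((hi0.add (hiu.const_mul (a/2))).sub
        (hi1.const_mul (3*b/2)))) (hi2.const_mul (5/2)),
      intervalIntegral.integral_sub (hi0.add (hiu.const_mul (a/2))) (hi1.const_mul (3*b/2)),
      intervalIntegral.integral_add hi0 (hiu.const_mul (a/2)),
      intervalIntegral.integral_const_mul, intervalIntegral.integral_const_mul,
      intervalIntegral.integral_const_mul]
  have hF0 : F 0 = 0 := by simp [hF, h0, h0']
  have hFL : F L = - (L/2) * (u2 L)^2 := by
    simp [hF, hL0, hL']
    ring
  rw [hsplit, hFL, hF0] at hFtc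
  linarith
end

section
/- Let L > 0, λ ∈ ℂ, and let u : ℝ → ℂ be five times continuously differentiable satisfying λ·u(x) + u'(x) + u'''(x) − u⁽⁵⁾(x) = 0 for all x ∈ [0, L], together with the boundary conditions u(0) = u(L) = 0, u'(0) = u'(L) = 0, u''(0) = u''(L) = 0. If u is not identically zero on [0, L] (i.e., there exists x ∈ [0,L] with u(x) ≠ 0), then λ is purely imaginary: Re λ = 0. -/
open MeasureTheory Complex

theorem spectral_eigenvalue_purely_imaginary (L : ℝ) (hL : 0 < L) (lam : ℂ)
    (u : ℝ → ℂ) (hu : ContDiff ℝ 5 u)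
    (heq : ∀ x ∈ Set.Icc (0 : ℝ) L,
      lam * u x + iteratedDeriv 1 u x + iteratedDeriv 3 u x - iteratedDeriv 5 u x = 0)
    (h0 : u 0 = 0) (hL0 : u L = 0)
    (h0' : iteratedDeriv 1 u 0 = 0) (hL' : iteratedDeriv 1 u L = 0)
    (h0'' : iteratedDeriv 2 u 0 = 0) (hL'' : iteratedDeriv 2 u L = 0)
    (hne : ∃ x ∈ Set.Icc (0 : ℝ) L, u x ≠ 0) :
    lam.re = 0 := by
  set v : ℕ → ℝ → ℂ := fun n => iteratedDeriv n u with hv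
  have hder : ∀ n : ℕ, n < 5 → ∀ x : ℝ, HasDerivAt (v n) (v (n+1) x) x := by
    intro n hn x
    have h1 : Differentiable ℝ (iteratedDeriv n u) :=
      hu.differentiable_iteratedDeriv n (by exact_mod_cast hn)
    simpa [hv, iteratedDeriv_succ] using (h1 x).hasDerivAt
  have hderc : ∀ n : ℕ, n < 5 → ∀ x : ℝ,
      HasDerivAt (fun y => (starRingEnd ℂ) (v n y)) ((starRingEnd ℂ) (v (n+1) x)) x := by
    intro n hn x
    exact (hder n hn x).star
  -- the energy function
  set F : ℝ → ℝ := fun x =>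
    (v 0 x * (starRingEnd ℂ) (v 0 x)).re / 2 + (v 2 x * (starRingEnd ℂ) (v 0 x)).re
      - (v 1 x * (starRingEnd ℂ) (v 1 x)).re / 2 - (v 4 x * (starRingEnd ℂ) (v 0 x)).re
      + (v 3 x * (starRingEnd ℂ) (v 1 x)).re - (v 2 x * (starRingEnd ℂ) (v 2 x)).re / 2
    with hF
  have hFder : ∀ x : ℝ, HasDerivAt F
      (((v 1 x + v 3 x - v 5 x) * (starRingEnd ℂ) (v 0 x)).re) x := by
    intro x
    have p : ∀ m n : ℕ, m < 5 → n < 5 → HasDerivAt (fun y => v m y * (starRingEnd ℂ) (v n y))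
        (v (m+1) x * (starRingEnd ℂ) (v n x) + v m x * (starRingEnd ℂ) (v (n+1) x)) x :=
      fun m n hm hn => (hder m hm x).mul (hderc n hn x)
    have re : ∀ (f : ℝ → ℂ) (c : ℂ), HasDerivAt f c x →
        HasDerivAt (fun y => (f y).re) c.re x := by
      intro f c h
      exact Complex.reCLM.hasFDerivAt.comp_hasDerivAt x h
    have H := ((((((re _ _ (p 0 0 (by norm_num) (by norm_num))).div_const 2).add
      (re _ _ (p 2 0 (by norm_num) (by norm_num)))).sub
      ((re _ _ (p 1 1 (by norm_num) (by norm_num))).div_const 2)).sub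
      (re _ _ (p 4 0 (by norm_num) (by norm_num)))).add
      (re _ _ (p 3 1 (by norm_num) (by norm_num)))).sub
      ((re _ _ (p 2 2 (by norm_num) (by norm_num))).div_const 2)
    refine H.congr_deriv ?_
    simp only [Complex.add_re, Complex.sub_re, Complex.mul_re, Complex.add_im, Complex.sub_im, Complex.conj_re, Complex.conj_im]
    ring
  -- on [0,L] the derivative is -lam.re * normSq (u x)
  have hFder' : ∀ x ∈ Set.uIcc (0:ℝ) L, HasDerivAt F (-(lam.re * Complex.normSq (u x))) x := by
    intro x hx
    rw [Set.uIcc_of_le hL.le] at hx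
    have h1 : v 1 x + v 3 x - v 5 x = -lam * u x := by
      have := heq x hx
      simp only [hv]
      linear_combination this
    have h2 := hFder x
    rw [h1] at h2
    have h3 : v 0 x = u x := by simp [hv]
    rw [h3] at h2
    convert h2 using 1
    rw [mul_assoc, Complex.mul_conj]
    simp [Complex.mul_re]
  have hcont : Continuous fun x => Complex.normSq (u x) :=
    Complex.continuous_normSq.comp hu.continuous
  have hint : IntervalIntegrable (fun x => -(lam.re * Complex.normSq (u x))) volume 0 L :=
    ((continuous_const.mul hcont).neg).intervalIntegrable 0 L
  have hFTC : ∫ x in (0:ℝ)..L, -(lam.re * Complex.normSq (u x)) = F L - F 0 :=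
    intervalIntegral.integral_eq_sub_of_hasDerivAt hFder' hint
  have h0'd : deriv u 0 = 0 := by rw [← iteratedDeriv_one]; exact h0'
  have hL'd : deriv u L = 0 := by rw [← iteratedDeriv_one]; exact hL'
  have hF0 : F 0 = 0 := by
    simp [hF, hv, h0, h0', h0'', h0'd]
  have hFL : F L = 0 := by
    simp [hF, hv, hL0, hL', hL'', hL'd]
  rw [hF0, hFL, sub_zero] at hFTC
  rw [intervalIntegral.integral_neg, neg_eq_zero, intervalIntegral.integral_const_mul] at hFTC
  by_contra hre
  have hintz : ∫ x in (0:ℝ)..L, Complex.normSq (u x) = 0 := by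
    rcases mul_eq_zero.1 hFTC with h | h
    · exact absurd h hre
    · exact h
  -- continuous nonneg with zero integral is zero
  have hint2 : IntervalIntegrable (fun x => Complex.normSq (u x)) volume 0 L :=
    hcont.intervalIntegrable 0 L
  have hae : (fun x => Complex.normSq (u x)) =ᵐ[volume.restrict (Set.Ioc 0 L)] 0 := by
    refine (intervalIntegral.integral_eq_zero_iff_of_le_of_nonneg_ae hL.le ?_ hint2).1 hintz
    exact Filter.Eventually.of_forall fun x => Complex.normSq_nonneg _
  have hae' : (fun x => Complex.normSq (u x)) =ᵐ[volume.restrict (Set.Icc 0 L)] 0 := by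
    rwa [Measure.restrict_congr_set Ioc_ae_eq_Icc] at hae
  have heqon : Set.EqOn (fun x => Complex.normSq (u x)) 0 (Set.Icc 0 L) := by
    refine Measure.eqOn_of_ae_eq hae' hcont.continuousOn continuousOn_const ?_
    rw [interior_Icc, closure_Ioo hL.ne]
  obtain ⟨x₀, hx₀, hux₀⟩ := hne
  have := heqon hx₀
  simp only [Pi.zero_apply] at this
  exact hux₀ (Complex.normSq_eq_zero.1 this)
end

section
/- Let α₁, α₂, α₃, α₄ ∈ ℂ, not all zero, satisfy the degeneracy condition α₁α₄ = α₂α₃ (vanishing of the determinant of the associated Möbius transformation), and let L > 0. Define N : ℂ → ℂ by N(ξ) = α₁·i·ξ − α₂·i·ξ·exp(−i·ξ·L) + α₃ − α₄·exp(−i·ξ·L). Then the set of imaginary parts of the zeros of N has at most two elements; i.e., there exist real numbers s, t such that every ξ ∈ ℂ with N(ξ) = 0 satisfies Im ξ = s or Im ξ = t. -/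
theorem degenerate_mobius_zero_imaginary_parts (α₁ α₂ α₃ α₄ : ℂ)
    (hne : ¬(α₁ = 0 ∧ α₂ = 0 ∧ α₃ = 0 ∧ α₄ = 0))
    (hdeg : α₁ * α₄ = α₂ * α₃) (L : ℝ) (hL : 0 < L) :
    ∃ s t : ℝ, ∀ ξ : ℂ,
      α₁ * Complex.I * ξ - α₂ * Complex.I * ξ * Complex.exp (-Complex.I * ξ * L)
        + α₃ - α₄ * Complex.exp (-Complex.I * ξ * L) = 0 →
      ξ.im = s ∨ ξ.im = t := by
  by_cases h24 : α₂ = 0 ∧ α₄ = 0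
  · obtain ⟨h2, h4⟩ := h24
    subst h2; subst h4
    by_cases h1 : α₁ = 0
    · subst h1
      refine ⟨0, 0, fun ξ hξ => ?_⟩
      simp only [zero_mul, mul_zero, sub_zero, zero_add] at hξ
      exact absurd ⟨rfl, rfl, hξ, rfl⟩ hne
    · refine ⟨((-α₃) / (α₁ * Complex.I)).im, 0, fun ξ hξ => ?_⟩
      left
      have hIa : α₁ * Complex.I ≠ 0 := mul_ne_zero h1 Complex.I_ne_zero
      have : ξ = (-α₃) / (α₁ * Complex.I) := by
        rw [eq_div_iff hIa]
        linear_combination hξ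
      rw [this]
  · obtain ⟨c, hc1, hc3⟩ : ∃ c : ℂ, α₁ = c * α₂ ∧ α₃ = c * α₄ := by
      by_cases h2 : α₂ = 0
      · have h4 : α₄ ≠ 0 := fun h => h24 ⟨h2, h⟩
        have h1 : α₁ = 0 := by
          have h := hdeg
          rw [h2, zero_mul] at h
          rcases mul_eq_zero.mp h with h | h
          · exact h
          · exact absurd h h4
        exact ⟨α₃ / α₄, by simp [h1, h2], by field_simp⟩
      · refine ⟨α₁ / α₂, by field_simp, ?_⟩
        field_simp
        linear_combination -hdeg
    refine ⟨((-α₄) / (α₂ * Complex.I)).im, Real.log (‖c‖) / L, fun ξ hξ => ?_⟩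
    have hfac : (α₂ * Complex.I * ξ + α₄) * (c - Complex.exp (-Complex.I * ξ * L)) = 0 := by
      linear_combination hξ - Complex.I * ξ * hc1 - hc3
    rcases mul_eq_zero.mp hfac with h | h
    · left
      have h2 : α₂ ≠ 0 := by
        intro h2
        rw [h2, zero_mul, zero_mul, zero_add] at h
        exact h24 ⟨h2, h⟩
      have hIa : α₂ * Complex.I ≠ 0 := mul_ne_zero h2 Complex.I_ne_zero
      have : ξ = (-α₄) / (α₂ * Complex.I) := by
        rw [eq_div_iff hIa]
        linear_combination h
      rw [this]
    · right
      have hE : Complex.exp (-Complex.I * ξ * L) = c := by linear_combination -h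
      have habs : Real.exp ((-Complex.I * ξ * (L : ℂ)).re) = ‖c‖ := by
        rw [← Complex.norm_exp, hE]
      have hre : (-Complex.I * ξ * (L : ℂ)).re = ξ.im * L := by
        simp [Complex.mul_re]
      rw [hre] at habs
      have : ξ.im * L = Real.log (‖c‖) := by
        rw [← habs, Real.log_exp]
      field_simp [hL.ne'] at this ⊢
      linarith
end
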